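/- Let A, M be real J×N matrices, Γ a symmetric positive definite J×J matrix, and B₀ a symmetric positive definite N×N matrix. Define the sequence of precision matrices by B_{ℓ+1} = R(B_ℓ) where R(B) = Aᵀ(Γ + MB⁻¹Mᵀ)⁻¹A + B₀, starting from B₀. Then every B_ℓ is symmetric positive definite and the sequence is non-decreasing in the Loewner order: B_{ℓ+1} ⪰ B_ℓ for all ℓ ≥ 0. -/

import Mathlib

/-!
Matrix inversion is antitone in the Loewner order and congruences `X ↦ Mᵀ X M` are
monotone, so `R(B) = Aᵀ (Γ + M B⁻¹ Mᵀ)⁻¹ A + B₀` is monotone on positive definite matrices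
and `R(B) ⪰ B₀`. Hence `B₁ ⪰ B₀`, and by induction `B_{ℓ+1} = R(B_ℓ) ⪰ R(B_{ℓ-1}) = B_ℓ`.
-/

open Matrix

/-- The precision iterates `B₀, B_{ℓ+1} = R(B_ℓ) = Aᵀ(Γ + M B_ℓ⁻¹ Mᵀ)⁻¹A + B₀`. -/
noncomputable def Bseq {N J : ℕ}
    (A M : Matrix (Fin J) (Fin N) ℝ) (Γ : Matrix (Fin J) (Fin J) ℝ)
    (B₀ : Matrix (Fin N) (Fin N) ℝ) : ℕ → Matrix (Fin N) (Fin N) ℝ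
  | 0 => B₀
  | (ℓ + 1) => Aᵀ * (Γ + M * (Bseq A M Γ B₀ ℓ)⁻¹ * Mᵀ)⁻¹ * A + B₀

namespace Matrix

/-- Both hypothesis and conclusion say that `fromBlocks A 1 1 B⁻¹` is positive semidefinite, via
its two Schur complements. -/
theorem PosDef.posSemidef_inv_sub_inv {K n : Type*} [Field K] [PartialOrder K] [StarRing K]
    [StarOrderedRing K] [Fintype n] [DecidableEq n] {A B : Matrix n n K}
    (hA : A.PosDef) (hB : B.PosDef) (h : (A - B).PosSemidef) : (B⁻¹ - A⁻¹).PosSemidef := by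
  have := hA.isUnit.invertible
  have := hB.isUnit.invertible
  have := hB.inv.isUnit.invertible
  have hblock : (fromBlocks A 1 1ᴴ B⁻¹).PosSemidef :=
    (hB.inv.fromBlocks₂₂ A 1).2 (by simpa [inv_inv_of_invertible] using h)
  simpa using (hA.fromBlocks₁₁ 1 B⁻¹).1 hblock

end Matrix

section PrecisionMap

variable {m n : Type*} [Fintype m] [Fintype n] [DecidableEq n]

theorem posDef_add_mul_inv_mul_transpose {Γ : Matrix m m ℝ} (hΓ : Γ.PosDef)
    (M : Matrix m n ℝ) {B : Matrix n n ℝ} (hB : B.PosDef) : (Γ + M * B⁻¹ * Mᵀ).PosDef := by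
  simpa using hΓ.add_posSemidef (hB.inv.posSemidef.mul_mul_conjTranspose_same M)

variable [DecidableEq m]

noncomputable def precisionMap (A M : Matrix m n ℝ) (Γ : Matrix m m ℝ) (B₀ B : Matrix n n ℝ) :
    Matrix n n ℝ :=
  Aᵀ * (Γ + M * B⁻¹ * Mᵀ)⁻¹ * A + B₀

variable (A M : Matrix m n ℝ) {Γ : Matrix m m ℝ} {B₀ B B' : Matrix n n ℝ}

theorem posSemidef_precisionMap_sub (hΓ : Γ.PosDef) (hB : B.PosDef) :
    (precisionMap A M Γ B₀ B - B₀).PosSemidef := by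
  simpa [precisionMap] using
    (posDef_add_mul_inv_mul_transpose hΓ M hB).inv.posSemidef.conjTranspose_mul_mul_same A

theorem posDef_precisionMap (hΓ : Γ.PosDef) (hB₀ : B₀.PosDef) (hB : B.PosDef) :
    (precisionMap A M Γ B₀ B).PosDef := by
  simpa using PosDef.posSemidef_add (posSemidef_precisionMap_sub A M (B₀ := B₀) hΓ hB) hB₀

theorem posSemidef_precisionMap_sub_precisionMap (hΓ : Γ.PosDef) (hB : B.PosDef)
    (hB' : B'.PosDef) (h : (B' - B).PosSemidef) :
    (precisionMap A M Γ B₀ B' - precisionMap A M Γ B₀ B).PosSemidef := by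
  have hinv : (M * (B⁻¹ - B'⁻¹) * Mᵀ).PosSemidef := by
    simpa using (hB'.posSemidef_inv_sub_inv hB h).mul_mul_conjTranspose_same M
  have hmid := (posDef_add_mul_inv_mul_transpose hΓ M hB).posSemidef_inv_sub_inv
    (posDef_add_mul_inv_mul_transpose hΓ M hB')
    (by simpa [Matrix.mul_sub, Matrix.sub_mul] using hinv)
  simpa [precisionMap, Matrix.mul_sub, Matrix.sub_mul] using hmid.conjTranspose_mul_mul_same A

end PrecisionMap

theorem Bseq_succ {N J : ℕ} (A M : Matrix (Fin J) (Fin N) ℝ) (Γ : Matrix (Fin J) (Fin J) ℝ)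
    (B₀ : Matrix (Fin N) (Fin N) ℝ) (ℓ : ℕ) :
    Bseq A M Γ B₀ (ℓ + 1) = precisionMap A M Γ B₀ (Bseq A M Γ B₀ ℓ) :=
  rfl

/-- Each precision iterate `B_ℓ` is symmetric positive definite, and the sequence is
non-decreasing in the Loewner order: `B_{ℓ+1} ⪰ B_ℓ` for all `ℓ ≥ 0`. -/
theorem stmt_11 {N J : ℕ}
    (A M : Matrix (Fin J) (Fin N) ℝ) (Γ : Matrix (Fin J) (Fin J) ℝ)
    (B₀ : Matrix (Fin N) (Fin N) ℝ)
    (hΓ : Γ.PosDef) (hB₀ : B₀.PosDef) :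
    ∀ ℓ : ℕ, (Bseq A M Γ B₀ ℓ).PosDef ∧
      (Bseq A M Γ B₀ (ℓ + 1) - Bseq A M Γ B₀ ℓ).PosSemidef := by
  intro ℓ
  induction ℓ with
  | zero => exact ⟨hB₀, posSemidef_precisionMap_sub A M hΓ hB₀⟩
  | succ ℓ ih =>
    obtain ⟨hpd, hmono⟩ := ih
    have hpd' : (Bseq A M Γ B₀ (ℓ + 1)).PosDef := posDef_precisionMap A M hΓ hB₀ hpd
    refine ⟨hpd', ?_⟩
    rw [Bseq_succ A M Γ B₀ (ℓ + 1), Bseq_succ A M Γ B₀ ℓ]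
    exact posSemidef_precisionMap_sub_precisionMap A M hΓ hpd hpd' hmono
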